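/- arXiv:1803.00093 — 5 statements merged into one kernel-verified Lean document; each statement's English description precedes it below -/
import Mathlib

section
/- Let s, β ∈ ℝ² with A := |s × β| > 0 and s_t := s + t·β. Suppose |β| > 1, |s| ≤ |β|, and t, t' ∈ [N, K] with N ≥ 1 and |t − t'| ≥ 1. Then sin θ(s_t, s_{t'}) ≥ A / ((K+1)²·|β|²). -/
/-!
By Lagrange's identity, `sin θ(u, v) · ‖u‖‖v‖ = |u × v|` in the plane, and
`s_t × s_{t'} = (t' - t) (s × β)`, so `sin θ(s_t, s_{t'}) · ‖s_t‖‖s_{t'}‖ ≥ A`. Combined with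
`‖s_t‖ ≤ (t + 1)‖β‖ ≤ (K + 1)‖β‖` this gives the bound, kept in multiplied-out form so that no
division by `‖s_t‖‖s_{t'}‖` occurs.
-/

open InnerProductGeometry RealInnerProductSpace

def cross (u v : EuclideanSpace ℝ (Fin 2)) : ℝ := u 0 * v 1 - u 1 * v 0

lemma inner_sq_add_cross_sq (u v : EuclideanSpace ℝ (Fin 2)) :
    ⟪u, v⟫ * ⟪u, v⟫ + cross u v ^ 2 = ⟪u, u⟫ * ⟪v, v⟫ := by
  simp only [PiLp.inner_apply, Fin.sum_univ_two, RCLike.inner_apply, conj_trivial, cross]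
  ring

lemma sin_angle_mul_norm_mul_norm_eq_abs_cross (u v : EuclideanSpace ℝ (Fin 2)) :
    Real.sin (angle u v) * (‖u‖ * ‖v‖) = |cross u v| := by
  rw [sin_angle_mul_norm_mul_norm, ← inner_sq_add_cross_sq, add_sub_cancel_left,
    Real.sqrt_sq_eq_abs]

lemma cross_add_smul_add_smul (s β : EuclideanSpace ℝ (Fin 2)) (t t' : ℝ) :
    cross (s + t • β) (s + t' • β) = (t' - t) * cross s β := by
  simp only [cross, PiLp.add_apply, PiLp.smul_apply, smul_eq_mul]
  ring

lemma norm_add_smul_le_of_norm_le {E : Type*} [SeminormedAddCommGroup E] [NormedSpace ℝ E]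
    {s β : E} (hs : ‖s‖ ≤ ‖β‖) {t : ℝ} (ht : 0 ≤ t) :
    ‖s + t • β‖ ≤ (t + 1) * ‖β‖ :=
  calc ‖s + t • β‖ ≤ ‖s‖ + t * ‖β‖ := by
        simpa [norm_smul, abs_of_nonneg ht] using norm_add_le s (t • β)
    _ ≤ (t + 1) * ‖β‖ := by linarith

theorem stmt_2_general (s β : EuclideanSpace ℝ (Fin 2))
    (A : ℝ) (hA : A = |s 0 * β 1 - s 1 * β 0|)
    (hs : ‖s‖ ≤ ‖β‖)
    (N K t t' : ℝ) (hN : 1 ≤ N)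
    (ht : t ∈ Set.Icc N K) (ht' : t' ∈ Set.Icc N K) (hsep : 1 ≤ |t - t'|) :
    Real.sin (angle (s + t • β) (s + t' • β)) ≥ A / ((K + 1) ^ 2 * ‖β‖ ^ 2) := by
  have ht0 : 0 ≤ t := by linarith [ht.1]
  have ht'0 : 0 ≤ t' := by linarith [ht'.1]
  have hA_le : A ≤ |cross (s + t • β) (s + t' • β)| := by
    rw [cross_add_smul_add_smul, abs_mul, abs_sub_comm, hA]
    exact le_mul_of_one_le_left (abs_nonneg _) hsep
  have hu : ‖s + t • β‖ ≤ (K + 1) * ‖β‖ :=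
    (norm_add_smul_le_of_norm_le hs ht0).trans (by gcongr; exact ht.2)
  have hv : ‖s + t' • β‖ ≤ (K + 1) * ‖β‖ :=
    (norm_add_smul_le_of_norm_le hs ht'0).trans (by gcongr; exact ht'.2)
  have hnorm : ‖s + t • β‖ * ‖s + t' • β‖ ≤ (K + 1) ^ 2 * ‖β‖ ^ 2 :=
    (mul_le_mul hu hv (norm_nonneg _) ((norm_nonneg _).trans hu)).trans_eq (by ring)
  refine div_le_of_le_mul₀ (by positivity) (sin_angle_nonneg _ _) ?_
  calc A ≤ Real.sin (angle (s + t • β) (s + t' • β)) * (‖s + t • β‖ * ‖s + t' • β‖) := by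
        rwa [sin_angle_mul_norm_mul_norm_eq_abs_cross]
    _ ≤ _ := mul_le_mul_of_nonneg_left hnorm (sin_angle_nonneg _ _)

/-- Separation estimate for protochild directions (Angle Fact (3)). -/
theorem stmt_2 (s β : EuclideanSpace ℝ (Fin 2))
    (A : ℝ) (hA : A = |s 0 * β 1 - s 1 * β 0|) (hApos : A > 0)
    (hβ : ‖β‖ > 1) (hs : ‖s‖ ≤ ‖β‖)
    (N K t t' : ℝ) (hN : 1 ≤ N)
    (ht : t ∈ Set.Icc N K) (ht' : t' ∈ Set.Icc N K) (hsep : 1 ≤ |t - t'|) :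
    Real.sin (angle (s + t • β) (s + t' • β)) ≥ A / ((K + 1) ^ 2 * ‖β‖ ^ 2) :=
  stmt_2_general s β A hA hs N K t t' hN ht ht' hsep
end

section
/- Let θ ∈ ℝ with cos θ > 1/2, let a, b > 0, δ > 0, and let g be the matrix [[ (b/a) cos θ, −ab sin θ ],[ sin θ/(ab), (a/b) cos θ ]]. If (h,v) ∈ ℝ² satisfies |g·(h,v)| ≤ δ, then |h| ≤ 2δ·(a/b) + 2|v|·a²·|sin θ|. -/
open Matrix

/-! The first coordinate of `g (h, v)` is `(b/a) cos θ · h - a b sin θ · v`, and it is bounded by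
`δ`. Since `cos θ > 1/2`, the coefficient of `h` is at least half of `b/a`, so `(b/a) |h|` is at
most twice `δ + a b |sin θ| |v|`. -/

lemma mul_abs_le_of_abs_mul_sub_le {k c x w δ : ℝ} (hc : 0 ≤ c) (hkc : k ≤ 2 * c)
    (hx : |c * x - w| ≤ δ) : k * |x| ≤ 2 * (δ + |w|) :=
  calc k * |x| ≤ 2 * c * |x| := mul_le_mul_of_nonneg_right hkc (abs_nonneg x)
    _ = 2 * |c * x - w + w| := by rw [sub_add_cancel, abs_mul, abs_of_nonneg hc, mul_assoc]
    _ ≤ 2 * (δ + |w|) := by gcongr; exact (abs_add_le _ _).trans (by gcongr)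

theorem stmt_6_general (θ a b δ : ℝ) (hθ : Real.cos θ > 1 / 2) (ha : 0 < a) (hb : 0 < b)
    (h v : ℝ)
    (g : Matrix (Fin 2) (Fin 2) ℝ)
    (hg : g = !![(b / a) * Real.cos θ, -(a * b) * Real.sin θ;
                 Real.sin θ / (a * b), (a / b) * Real.cos θ])
    (hshort : Real.sqrt ((g.mulVec ![h, v] 0) ^ 2 + (g.mulVec ![h, v] 1) ^ 2) ≤ δ) :
    |h| ≤ 2 * δ * (a / b) + 2 * |v| * a ^ 2 * |Real.sin θ| := by
  have hrow : |(b / a * Real.cos θ) * h - a * b * Real.sin θ * v| ≤ δ := by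
    refine (Real.abs_le_sqrt ?_).trans hshort
    simp only [hg, mulVec, dotProduct, Fin.sum_univ_two, of_apply, cons_val', cons_val_zero,
      cons_val_one, empty_val', cons_val_fin_one, neg_mul, ← sub_eq_add_neg]
    exact le_add_of_nonneg_right (sq_nonneg _)
  have hba : 0 < b / a := div_pos hb ha
  have key := mul_abs_le_of_abs_mul_sub_le (k := b / a) (mul_pos hba (by linarith)).le
    (by nlinarith) hrow
  rw [abs_mul, abs_mul, abs_of_pos (mul_pos ha hb)] at key
  calc |h| = a / b * (b / a * |h|) := by field_simp
    _ ≤ a / b * (2 * (δ + a * b * |Real.sin θ| * |v|)) := by gcongr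
    _ = 2 * δ * (a / b) + 2 * |v| * a ^ 2 * |Real.sin θ| := by field_simp

/-- Step 2 of Lemma 6.2: bound on the horizontal component of a vector
that becomes short after applying the transition matrix. -/
theorem stmt_6 (θ a b δ : ℝ) (hθ : Real.cos θ > 1 / 2) (ha : 0 < a) (hb : 0 < b)
    (hδ : 0 < δ) (h v : ℝ)
    (g : Matrix (Fin 2) (Fin 2) ℝ)
    (hg : g = !![(b / a) * Real.cos θ, -(a * b) * Real.sin θ;
                 Real.sin θ / (a * b), (a / b) * Real.cos θ])
    (hshort : Real.sqrt ((g.mulVec ![h, v] 0) ^ 2 + (g.mulVec ![h, v] 1) ^ 2) ≤ δ) :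
    |h| ≤ 2 * δ * (a / b) + 2 * |v| * a ^ 2 * |Real.sin θ| :=
  stmt_6_general θ a b δ hθ ha hb h v g hg hshort
end

section
/- Let t > 0 and 0 ≤ ν < 1, and let B ⊆ [t, 2t] be a measurable set with Lebesgue measure at most ν·t. Then there exist at least ⌈(1−ν)t − 1⌉ points in [t, 2t] \ B that are pairwise at distance at least 1 from each other. (More precisely, there exists a finite set P ⊆ [t,2t]\B with |P| ≥ (1−ν)t − 1 and |p − q| ≥ 1 for all distinct p, q ∈ P.) -/
/-! Averaging over integer translates: `Ioc 0 1` is a fundamental domain for the translation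
action of `ℤ` on `ℝ`, so `volume S = ∫ x in (0, 1], #{n : ℤ | n + x ∈ S}`. Some `x` therefore
has at least `volume S` integer translates in `S`, and distinct integer translates of one point
are automatically at distance at least `1`. For `S = [t, 2t] \ B` this gives `⌊(1 - ν) t⌋` points. -/

open MeasureTheory Set
open scoped ENNReal

theorem volume_eq_lintegral_encard_intTranslates {S : Set ℝ} (hS : MeasurableSet S) :
    volume S = ∫⁻ x in Ioc (0 : ℝ) 1, {n : ℤ | (n : ℝ) + x ∈ S}.encard := by
  let e : ℤ ≃ AddSubgroup.zmultiples (1 : ℝ) :=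
    Equiv.ofBijective (fun n => ⟨n, AddSubgroup.intCast_mem_zmultiples_one n⟩)
      ⟨fun _ _ h => by simpa using h, by rintro ⟨_, n, rfl⟩; exact ⟨n, by simp⟩⟩
  calc volume S = ∫⁻ y, S.indicator 1 y := (lintegral_indicator_one hS).symm
    _ = ∑' g : AddSubgroup.zmultiples (1 : ℝ),
          ∫⁻ x in Ioc (0 : ℝ) (0 + 1), S.indicator 1 (g +ᵥ x) :=
      (isAddFundamentalDomain_Ioc one_pos 0).lintegral_eq_tsum'' _
    _ = ∑' n : ℤ, ∫⁻ x in Ioc (0 : ℝ) 1, S.indicator 1 ((n : ℝ) + x) := by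
      rw [← e.tsum_eq, zero_add]
      rfl
    _ = ∫⁻ x in Ioc (0 : ℝ) 1, ∑' n : ℤ, S.indicator 1 ((n : ℝ) + x) :=
      (lintegral_tsum fun _ =>
        ((measurable_one.indicator hS).comp (measurable_const_add _)).aemeasurable).symm
    _ = ∫⁻ x in Ioc (0 : ℝ) 1, {n : ℤ | (n : ℝ) + x ∈ S}.encard := by
      congr 1 with x
      rw [← ENNReal.tsum_set_one, tsum_subtype _ fun _ => (1 : ℝ≥0∞)]
      rfl

theorem exists_volume_le_encard_intTranslates {S : Set ℝ} (hS : MeasurableSet S)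
    (hS_fin : volume S ≠ ∞) : ∃ x : ℝ, volume S ≤ {n : ℤ | (n : ℝ) + x ∈ S}.encard := by
  have : IsProbabilityMeasure (volume.restrict (Ioc (0 : ℝ) 1)) := ⟨by simp⟩
  rw [volume_eq_lintegral_encard_intTranslates hS] at hS_fin ⊢
  exact exists_lintegral_le hS_fin

theorem one_le_abs_intCast_add_sub_intCast_add {n m : ℤ} (h : n ≠ m) (x : ℝ) :
    1 ≤ |((n : ℝ) + x) - ((m : ℝ) + x)| := by
  rw [add_sub_add_right_eq_sub, ← Int.cast_sub, ← Int.cast_abs]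
  exact_mod_cast Int.one_le_abs (sub_ne_zero.mpr h)

theorem exists_finset_unitSeparated_of_natCast_le_volume {S : Set ℝ} (hS : MeasurableSet S)
    (hS_fin : volume S ≠ ∞) {k : ℕ} (hk : (k : ℝ≥0∞) ≤ volume S) :
    ∃ P : Finset ℝ, ↑P ⊆ S ∧ P.card = k ∧ ∀ p ∈ P, ∀ q ∈ P, p ≠ q → 1 ≤ |p - q| := by
  obtain ⟨x, hx⟩ := exists_volume_le_encard_intTranslates hS hS_fin
  have hk' : (k : ℕ∞) ≤ {n : ℤ | (n : ℝ) + x ∈ S}.encard := by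
    exact_mod_cast hk.trans hx
  obtain ⟨N, hNS, hNk⟩ := exists_subset_encard_eq hk'
  have hN : N.Finite := finite_of_encard_eq_coe hNk
  refine ⟨hN.toFinset.image fun n : ℤ => (n : ℝ) + x, ?_, ?_, ?_⟩
  · rw [Finset.coe_image, Finite.coe_toFinset, image_subset_iff]
    exact hNS
  · rw [Finset.card_image_of_injective _ fun _ _ h => by simpa using h]
    exact_mod_cast hN.encard_eq_coe_toFinset_card.symm.trans hNk
  · simp only [Finset.mem_image]
    rintro _ ⟨n, -, rfl⟩ _ ⟨m, -, rfl⟩ hnm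
    exact one_le_abs_intCast_add_sub_intCast_add (by rintro rfl; exact hnm rfl) x

theorem stmt_7_general (t ν : ℝ) (ht : 0 < t) (hν0 : 0 ≤ ν) (hν1 : ν < 1)
    (B : Set ℝ) (hBmeas : MeasurableSet B)
    (hBvol : volume B ≤ ENNReal.ofReal (ν * t)) :
    ∃ P : Finset ℝ, ↑P ⊆ Set.Icc t (2 * t) \ B ∧
      (P.card : ℝ) ≥ (1 - ν) * t - 1 ∧
      ∀ p ∈ P, ∀ q ∈ P, p ≠ q → 1 ≤ |p - q| := by
  have hgood : ENNReal.ofReal ((1 - ν) * t) ≤ volume (Icc t (2 * t) \ B) :=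
    calc ENNReal.ofReal ((1 - ν) * t) = ENNReal.ofReal (2 * t - t) - ENNReal.ofReal (ν * t) := by
          rw [← ENNReal.ofReal_sub _ (by positivity)]; ring_nf
      _ ≤ volume (Icc t (2 * t)) - volume B := by rw [Real.volume_Icc]; gcongr
      _ ≤ volume (Icc t (2 * t) \ B) := le_measure_sdiff
  have hfloor : ((⌊(1 - ν) * t⌋₊ : ℕ) : ℝ≥0∞) ≤ ENNReal.ofReal ((1 - ν) * t) := by
    rw [← ENNReal.ofReal_natCast]
    exact ENNReal.ofReal_le_ofReal (Nat.floor_le (by nlinarith))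
  obtain ⟨P, hPS, hPcard, hPsep⟩ := exists_finset_unitSeparated_of_natCast_le_volume
    (measurableSet_Icc.diff hBmeas)
    ((measure_mono sdiff_subset).trans_lt measure_Icc_lt_top).ne (hfloor.trans hgood)
  refine ⟨P, hPS, ?_, hPsep⟩
  rw [hPcard]
  linarith [Nat.lt_floor_add_one ((1 - ν) * t)]

/-- Corollary `C:lots`: from an interval `[t,2t]` whose bad subset has measure
at most `ν·t` one may select at least `(1−ν)t − 1` unit-separated good points. -/
theorem stmt_7 (t ν : ℝ) (ht : 0 < t) (hν0 : 0 ≤ ν) (hν1 : ν < 1)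
    (B : Set ℝ) (hBsub : B ⊆ Set.Icc t (2 * t)) (hBmeas : MeasurableSet B)
    (hBvol : volume B ≤ ENNReal.ofReal (ν * t)) :
    ∃ P : Finset ℝ, ↑P ⊆ Set.Icc t (2 * t) \ B ∧
      (P.card : ℝ) ≥ (1 - ν) * t - 1 ∧
      ∀ p ∈ P, ∀ q ∈ P, p ≠ q → 1 ≤ |p - q| :=
  stmt_7_general t ν ht hν0 hν1 B hBmeas hBvol
end

section
/- Let δ, c, b, b₁ > 0 with b > 21, δ < 1/3, and b₁ ≥ b·log b. Then 1/(b₁²·log b₁) + δ/(b²·log b) + (δ/2)²/(b²·(log b)²) ≤ 1/(b²·log b). -/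
/-! Put `L = log b`, so `L > 3` because `e³ < 21`. From `b₁ ≥ bL ≥ b` we get
`b₁² log b₁ ≥ b²L³`, so relative to the target `1/(b²L)` the three terms are at most
`1/L² < 1/9`, `δ < 1/3` and `δ²/(4L) < 1/108`, which sum to `49/108 < 1`. -/

namespace Real

lemma exp_three_lt_twentyOne : exp 3 < 21 := by
  have h : exp 3 = exp 1 ^ 3 := by rw [← exp_nat_mul]; norm_num
  rw [h]
  calc exp 1 ^ 3 < 2.7182818286 ^ 3 := by gcongr; exact exp_one_lt_d9
    _ < 21 := by norm_num

lemma three_lt_log_of_twentyOne_lt {b : ℝ} (hb : 21 < b) : 3 < log b :=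
  (lt_log_iff_exp_lt (by linarith)).mpr (exp_three_lt_twentyOne.trans hb)

lemma sq_mul_log_pow_three_le {b b₁ : ℝ} (hb : 0 < b) (hL : 1 ≤ log b)
    (hb₁ : b * log b ≤ b₁) : b ^ 2 * log b ^ 3 ≤ b₁ ^ 2 * log b₁ := by
  have hbb₁ : b ≤ b₁ := le_trans (le_mul_of_one_le_right hb.le hL) hb₁
  have hlog : log b ≤ log b₁ := log_le_log hb hbb₁
  calc b ^ 2 * log b ^ 3 = (b * log b) ^ 2 * log b := by ring
    _ ≤ b₁ ^ 2 * log b₁ := by gcongr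

end Real

lemma one_div_add_div_add_sq_div_le_one_div {A L X δ : ℝ} (hA : 0 < A) (hL : 3 ≤ L)
    (hX : A * L ^ 3 ≤ X) (hδ0 : 0 ≤ δ) (hδ : δ ≤ 1 / 3) :
    1 / X + δ / (A * L) + (δ / 2) ^ 2 / (A * L ^ 2) ≤ 1 / (A * L) := by
  have hL0 : 0 < L := by linarith
  set s := 1 / (A * L) with hs
  have hs0 : 0 < s := by positivity
  have h₁ : 1 / X ≤ s / 9 := by
    calc 1 / X ≤ 1 / (A * L ^ 3) := one_div_le_one_div_of_le (by positivity) hX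
      _ = s / L ^ 2 := by rw [hs]; field_simp
      _ ≤ s / 9 := by gcongr; nlinarith
  have h₂ : δ / (A * L) ≤ s / 3 := by
    calc δ / (A * L) = δ * s := by rw [hs]; field_simp
      _ ≤ 1 / 3 * s := by gcongr
      _ = s / 3 := by ring
  have h₃ : (δ / 2) ^ 2 / (A * L ^ 2) ≤ s / 108 := by
    have hδ2 : δ / 2 ≤ 1 / 6 := by linarith
    calc (δ / 2) ^ 2 / (A * L ^ 2) = (δ / 2) ^ 2 * s / L := by rw [hs]; field_simp
      _ ≤ (1 / 6) ^ 2 * s / 3 := by gcongr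
      _ = s / 108 := by ring
  linarith

theorem stmt_13_general (δ b b₁ : ℝ) (hδ0 : 0 < δ) (hb : b > 21) (hδ : δ < 1 / 3)
    (hb₁ : b₁ ≥ b * Real.log b) :
    1 / (b₁ ^ 2 * Real.log b₁) + δ / (b ^ 2 * Real.log b) +
      (δ / 2) ^ 2 / (b ^ 2 * (Real.log b) ^ 2) ≤ 1 / (b ^ 2 * Real.log b) := by
  have hL := Real.three_lt_log_of_twentyOne_lt hb
  have hb0 : 0 < b := by linarith
  exact one_div_add_div_add_sq_div_le_one_div (by positivity) hL.le
    (Real.sq_mul_log_pow_three_le hb0 (by linarith) hb₁) hδ0.le hδ.le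

/-- The computation in Angle Fact 2, part (1): `I_{β₁} ⊆ I_{β₀}`. -/
theorem stmt_13 (δ c b b₁ : ℝ) (hδ0 : 0 < δ) (hc : 0 < c) (hb0 : 0 < b)
    (hb₁0 : 0 < b₁) (hb : b > 21) (hδ : δ < 1 / 3) (hb₁ : b₁ ≥ b * Real.log b) :
    1 / (b₁ ^ 2 * Real.log b₁) + δ / (b ^ 2 * Real.log b) +
      (δ / 2) ^ 2 / (b ^ 2 * (Real.log b) ^ 2) ≤ 1 / (b ^ 2 * Real.log b) :=
  stmt_13_general δ b b₁ hδ0 hb hδ hb₁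
end

section
/- Let β ∈ ℝ² be nonzero, let M > 1, 0 < ε < 1, and suppose log|β| > 4/ε². Suppose the angle between β and the vertical direction is at most 1/(|β|²·log|β|). Then for every t with log|β| + log(2/ε) ≤ t ≤ log(M·|β|·log|β|) − log(2M/ε), the vector g_t·β has Euclidean norm at most ε·√2 (indeed both components have absolute value at most ε/2, hence ‖g_t β‖ ≤ ε). -/
/-!
Near-verticality controls the horizontal coordinate: `|β₀| = ‖β‖ sin ∠(β, e₂) ≤ 1 / (‖β‖ log ‖β‖)`,
while trivially `|β₁| ≤ ‖β‖`. The lower bound on `t` gives `e^{-t} ≤ ε / (2‖β‖)` and the upper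
bound gives `e^t ≤ ε ‖β‖ log ‖β‖ / 2`, so both coordinates of `g_t β` are at most `ε / 2`.
-/
open InnerProductGeometry Real

namespace EuclideanSpace

lemma norm_mul_sin_angle_single_one (β : EuclideanSpace ℝ (Fin 2)) :
    ‖β‖ * sin (angle β (single 1 1)) = |β 0| := by
  have h := sin_angle_mul_norm_mul_norm β (single 1 (1 : ℝ))
  have hsq := real_norm_sq_eq β
  simp only [Fin.sum_univ_two] at hsq
  simp only [PiLp.norm_single, norm_one, mul_one, real_inner_self_eq_norm_sq, inner_single_right,
    PiLp.single_apply, if_true, conj_trivial, one_mul] at h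
  rw [mul_comm, h, hsq, show β 0 ^ 2 + β 1 ^ 2 - β 1 * β 1 = β 0 ^ 2 by ring, sqrt_sq_eq_abs]

lemma abs_apply_zero_le_norm_mul_angle (β : EuclideanSpace ℝ (Fin 2)) :
    |β 0| ≤ ‖β‖ * angle β (single 1 1) := by
  rw [← norm_mul_sin_angle_single_one]
  exact mul_le_mul_of_nonneg_left (sin_le (angle_nonneg _ _)) (norm_nonneg _)

lemma norm_le_of_abs_apply_le_half (x : EuclideanSpace ℝ (Fin 2)) {r : ℝ}
    (h0 : |x 0| ≤ r / 2) (h1 : |x 1| ≤ r / 2) : ‖x‖ ≤ r := by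
  have hr : 0 ≤ r := by linarith [abs_nonneg (x 0)]
  rw [← abs_norm, ← abs_of_nonneg hr, ← sq_le_sq, real_norm_sq_eq, Fin.sum_univ_two]
  nlinarith [sq_abs (x 0), sq_abs (x 1), abs_nonneg (x 0), abs_nonneg (x 1)]

end EuclideanSpace

lemma Real.exp_neg_le_inv_of_log_le {x t : ℝ} (hx : 0 < x) (h : log x ≤ t) :
    exp (-t) ≤ x⁻¹ := by
  rw [exp_neg]
  exact inv_anti₀ hx ((log_le_iff_le_exp hx).mp h)

theorem stmt_17_general (β : EuclideanSpace ℝ (Fin 2))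
    (M ε : ℝ) (hM : 1 < M) (hε0 : 0 < ε)
    (hlog : Real.log ‖β‖ > 4 / ε ^ 2)
    (hangle : angle β (EuclideanSpace.single 1 1) ≤ 1 / (‖β‖ ^ 2 * Real.log ‖β‖))
    (t : ℝ)
    (ht1 : Real.log ‖β‖ + Real.log (2 / ε) ≤ t)
    (ht2 : t ≤ Real.log (M * ‖β‖ * Real.log ‖β‖) - Real.log (2 * M / ε)) :
    |Real.exp t * β 0| ≤ ε / 2 ∧ |Real.exp (-t) * β 1| ≤ ε / 2 ∧
      ‖(WithLp.equiv 2 (Fin 2 → ℝ)).symm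
        ![Real.exp t * β 0, Real.exp (-t) * β 1]‖ ≤ ε := by
  set b := ‖β‖
  set L := log b
  have hL : 0 < L := lt_of_le_of_lt (by positivity) hlog
  have hb : 1 < b := (log_pos_iff (norm_nonneg β)).mp hL
  have hβ0 : |β 0| ≤ 1 / (b * L) := calc
    |β 0| ≤ b * angle β (EuclideanSpace.single 1 1) :=
      EuclideanSpace.abs_apply_zero_le_norm_mul_angle β
    _ ≤ b * (1 / (b ^ 2 * L)) := by gcongr
    _ = 1 / (b * L) := by field_simp
  have hβ1 : |β 1| ≤ b := by simpa using PiLp.norm_apply_le β 1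
  have hexp : exp t ≤ ε * b * L / 2 := by
    rwa [← log_div (by positivity) (by positivity), le_log_iff_exp_le (by positivity),
      show M * b * L / (2 * M / ε) = ε * b * L / 2 by field_simp] at ht2
  have hexp_neg : exp (-t) ≤ ε / (2 * b) := by
    rw [← log_mul (by positivity) (by positivity)] at ht1
    calc exp (-t) ≤ (b * (2 / ε))⁻¹ := exp_neg_le_inv_of_log_le (by positivity) ht1
      _ = ε / (2 * b) := by field_simp
  have hx0 : |exp t * β 0| ≤ ε / 2 := calc
    |exp t * β 0| = exp t * |β 0| := by rw [abs_mul, abs_of_pos (exp_pos t)]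
    _ ≤ ε * b * L / 2 * (1 / (b * L)) := by gcongr
    _ = ε / 2 := by field_simp
  have hx1 : |exp (-t) * β 1| ≤ ε / 2 := calc
    |exp (-t) * β 1| = exp (-t) * |β 1| := by rw [abs_mul, abs_of_pos (exp_pos _)]
    _ ≤ ε / (2 * b) * b := by gcongr
    _ = ε / 2 := by field_simp
  exact ⟨hx0, hx1, EuclideanSpace.norm_le_of_abs_apply_le_half _ (by simpa using hx0)
    (by simpa using hx1)⟩

/-- Lemma `L2`: a cylinder nearly parallel to the flow direction stays short
under the geodesic flow `g_t = diag(e^t, e^{−t})` for the stated range of times. -/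
theorem stmt_17 (β : EuclideanSpace ℝ (Fin 2)) (hβ : β ≠ 0)
    (M ε : ℝ) (hM : 1 < M) (hε0 : 0 < ε) (hε1 : ε < 1)
    (hlog : Real.log ‖β‖ > 4 / ε ^ 2)
    (hangle : angle β (EuclideanSpace.single 1 1) ≤ 1 / (‖β‖ ^ 2 * Real.log ‖β‖))
    (t : ℝ)
    (ht1 : Real.log ‖β‖ + Real.log (2 / ε) ≤ t)
    (ht2 : t ≤ Real.log (M * ‖β‖ * Real.log ‖β‖) - Real.log (2 * M / ε)) :
    |Real.exp t * β 0| ≤ ε / 2 ∧ |Real.exp (-t) * β 1| ≤ ε / 2 ∧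
      ‖(WithLp.equiv 2 (Fin 2 → ℝ)).symm
        ![Real.exp t * β 0, Real.exp (-t) * β 1]‖ ≤ ε :=
  stmt_17_general β M ε hM hε0 hlog hangle t ht1 ht2
end
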